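/- For every K > 0, the system of equations l(r₂) − l(r₁) = 2K and l̃(r₂) − l̃(r₁) = K has a unique solution (r₁, r₂) with 0 < r₁ < r₂ < 1, and this solution satisfies r₁ = 1 − r₂ and l(r₂) = K (so that r₂ ∈ (1/2, 1)). -/

import Mathlib

/-!
Since `2 l̃(r) − l(r) = 1/(r(1−r)) − 2`, twice the second equation minus the first forces
`r₁(1−r₁) = r₂(1−r₂)`, i.e. `r₁ = 1 − r₂` when `r₁ ≠ r₂`. The symmetries `l(1−r) = −l(r)` and
`l̃(r) − l̃(1−r) = l(r)` then reduce both equations to `l(r₂) = K`, which has exactly one root in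
`(1/2, 1)` because `l` is continuous and strictly increasing on `(0, 1)`, vanishes at `1/2` and is
unbounded near `1`.
-/

/-- `l(r) = 2·log(r/(1−r)) − 1/r + 1/(1−r)`. -/
noncomputable def l (r : ℝ) : ℝ := 2 * Real.log (r / (1 - r)) - 1 / r + 1 / (1 - r)

/-- `l̃(r) = log(r/(1−r)) + r/(1−r)`. -/
noncomputable def ltilde (r : ℝ) : ℝ := Real.log (r / (1 - r)) + r / (1 - r)

open Set

lemma l_one_sub (r : ℝ) : l (1 - r) = -l r := by
  rw [l, l, sub_sub_cancel, ← inv_div, Real.log_inv]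
  ring

lemma ltilde_sub_ltilde_one_sub {r : ℝ} (h0 : r ≠ 0) (h1 : 1 - r ≠ 0) :
    ltilde r - ltilde (1 - r) = l r := by
  rw [ltilde, ltilde, l, sub_sub_cancel, ← inv_div, Real.log_inv]
  field_simp
  ring

lemma two_mul_ltilde_sub_l {r : ℝ} (h0 : r ≠ 0) (h1 : 1 - r ≠ 0) :
    2 * ltilde r - l r = 1 / (r * (1 - r)) - 2 := by
  rw [ltilde, l]
  field_simp
  ring

lemma eq_one_sub_of_two_mul_ltilde_sub {a b : ℝ} (ha : 0 < a) (hab : a < b) (hb : b < 1)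
    (h : 2 * (ltilde b - ltilde a) = l b - l a) : a = 1 - b := by
  have ha1 : 1 - a ≠ 0 := by linarith
  have hb1 : 1 - b ≠ 0 := by linarith
  have hinv : 1 / (b * (1 - b)) = 1 / (a * (1 - a)) := by
    linarith [two_mul_ltilde_sub_l (by linarith) hb1, two_mul_ltilde_sub_l ha.ne' ha1]
  have hprod : a * (1 - a) = b * (1 - b) := by
    simpa only [one_div, inv_inj] using hinv.symm
  have hfactor : (b - a) * (1 - (a + b)) = 0 := by linear_combination -hprod
  rcases mul_eq_zero.mp hfactor with h | h <;> linarith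

lemma eq_one_sub_and_l_eq {K r₁ r₂ : ℝ} (h0 : 0 < r₁) (h12 : r₁ < r₂) (h1 : r₂ < 1)
    (hl : l r₂ - l r₁ = 2 * K) (hlt : ltilde r₂ - ltilde r₁ = K) :
    r₁ = 1 - r₂ ∧ l r₂ = K := by
  have hr₁ : r₁ = 1 - r₂ := eq_one_sub_of_two_mul_ltilde_sub h0 h12 h1 (by linarith)
  rw [hr₁, l_one_sub] at hl
  exact ⟨hr₁, by linarith⟩

lemma l_strictMonoOn : StrictMonoOn l (Ioo 0 1) := by
  intro a ⟨ha0, ha1⟩ b ⟨_, hb1⟩ hab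
  have ha1' : 0 < 1 - a := by linarith
  have hb1' : 0 < 1 - b := by linarith
  have hodds : a / (1 - a) < b / (1 - b) := by
    rw [div_lt_div_iff₀ ha1' hb1']
    nlinarith
  have hlog := Real.log_lt_log (by positivity) hodds
  have hinv : 1 / b < 1 / a := one_div_lt_one_div_of_lt ha0 hab
  have hinv' : 1 / (1 - a) < 1 / (1 - b) := one_div_lt_one_div_of_lt hb1' (by linarith)
  rw [l, l]
  linarith

lemma l_continuousOn : ContinuousOn l (Ioo 0 1) := by
  intro r ⟨h0, h1⟩
  have h1' : 1 - r ≠ 0 := by linarith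
  unfold l
  fun_prop (disch := first | positivity | assumption)

lemma l_half : l (1 / 2) = 0 := by
  norm_num [l]

lemma exists_le_l (K : ℝ) : ∃ b ∈ Ico (1 / 2 : ℝ) 1, K ≤ l b := by
  set t := |K| + 2
  have ht : 2 ≤ t := by simp only [t]; linarith [abs_nonneg K]
  have hb : 1 - (1 - 1 / t) = 1 / t := sub_sub_cancel 1 _
  have ht_inv : 1 / t ≤ 1 / 2 := one_div_le_one_div_of_le two_pos ht
  refine ⟨1 - 1 / t, ⟨by linarith, by simp only [sub_lt_self_iff]; positivity⟩, ?_⟩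
  have hlog : 0 ≤ Real.log ((1 - 1 / t) / (1 / t)) := by
    apply Real.log_nonneg
    rw [le_div_iff₀ (by positivity)]
    linarith
  have hinv : 1 / (1 - 1 / t) ≤ 2 := by
    rw [div_le_iff₀ (by linarith)]
    linarith
  rw [l, hb, one_div_one_div]
  linarith [le_abs_self K]

lemma exists_l_eq_of_pos {K : ℝ} (hK : 0 < K) : ∃ c ∈ Ioo (1 / 2 : ℝ) 1, l c = K := by
  obtain ⟨b, ⟨hb_half, hb1⟩, hKb⟩ := exists_le_l K
  have hcont : ContinuousOn l (Icc (1 / 2) b) :=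
    l_continuousOn.mono (Icc_subset_Ioo (by norm_num) hb1)
  obtain ⟨c, ⟨hc_half, hcb⟩, hc⟩ :=
    intermediate_value_Ioc hb_half hcont (show K ∈ Ioc (l (1 / 2)) (l b) from ⟨l_half ▸ hK, hKb⟩)
  exact ⟨c, ⟨hc_half, hcb.trans_lt hb1⟩, hc⟩

theorem stmt_12 (K : ℝ) (hK : 0 < K) :
    (∃! p : ℝ × ℝ, 0 < p.1 ∧ p.1 < p.2 ∧ p.2 < 1 ∧
      l p.2 - l p.1 = 2 * K ∧ ltilde p.2 - ltilde p.1 = K) ∧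
    (∀ r₁ r₂ : ℝ, 0 < r₁ → r₁ < r₂ → r₂ < 1 →
      l r₂ - l r₁ = 2 * K → ltilde r₂ - ltilde r₁ = K →
      r₁ = 1 - r₂ ∧ l r₂ = K ∧ r₂ ∈ Set.Ioo (1 / 2 : ℝ) 1) := by
  have solution_spec : ∀ r₁ r₂ : ℝ, 0 < r₁ → r₁ < r₂ → r₂ < 1 →
      l r₂ - l r₁ = 2 * K → ltilde r₂ - ltilde r₁ = K →
      r₁ = 1 - r₂ ∧ l r₂ = K ∧ r₂ ∈ Set.Ioo (1 / 2 : ℝ) 1 := by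
    intro r₁ r₂ h0 h12 h1 hl hlt
    obtain ⟨hr₁, hr₂⟩ := eq_one_sub_and_l_eq h0 h12 h1 hl hlt
    exact ⟨hr₁, hr₂, by linarith, h1⟩
  refine ⟨?_, solution_spec⟩
  obtain ⟨c, ⟨hc_half, hc1⟩, hc⟩ := exists_l_eq_of_pos hK
  have hc_mem : c ∈ Ioo (0 : ℝ) 1 := ⟨by linarith, hc1⟩
  refine ⟨(1 - c, c), ⟨by linarith, by linarith, hc1, ?_, ?_⟩, ?_⟩
  · rw [l_one_sub, hc]
    ring
  · rw [ltilde_sub_ltilde_one_sub hc_mem.1.ne' (by linarith), hc]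
  · rintro ⟨q₁, q₂⟩ ⟨hq0, hq12, hq1, hql, hqlt⟩
    obtain ⟨hq₁, hq₂, hq_half, -⟩ := solution_spec q₁ q₂ hq0 hq12 hq1 hql hqlt
    have hq : q₂ = c := l_strictMonoOn.injOn ⟨by linarith, hq1⟩ hc_mem (hq₂.trans hc.symm)
    rw [hq₁, hq]
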